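/- Let n ≥ 2 be an integer and γ > 1. There exists a constant c > 0, depending only on n and γ, such that for every ε > 0 the following holds: if h : [0,1] → ℝ is continuous on [0,1], twice continuously differentiable on (0,1), satisfies Lh = 0 on (0,1), h(0) = 0, h(1) = 1, and r < h(r) for all r ∈ (0,1), then h(r) > max{ r^α − (c√ε)^α, 0 } for all r ∈ (0,1). -/

import Mathlib

open Set Filter

noncomputable section

/-- The ODE operator `L`:
`(L h)(r) = h'' + ((n-2)/r + 2r/(ε+r²)) h' - ((n-2)/r² + 2/(γ(ε+r²))) h`. -/
def Lop (n : ℕ) (γ ε : ℝ) (h : ℝ → ℝ) (r : ℝ) : ℝ :=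
  deriv (deriv h) r + (((n:ℝ) - 2)/r + 2*r/(ε + r^2)) * deriv h r
    - (((n:ℝ) - 2)/r^2 + 2/(γ*(ε + r^2))) * h r

/-- `α := (-(n-1) + √((n-1)² + 4(n-2 + 2/γ)))/2`. -/
def alphaN (n : ℕ) (γ : ℝ) : ℝ :=
  (-((n:ℝ) - 1) + Real.sqrt (((n:ℝ)-1)^2 + 4*((n:ℝ) - 2 + 2/γ)))/2

/-- `h` is a normalized solution of `Lh = 0` on `(0,1)`: continuous on `[0,1]`,
twice continuously differentiable on `(0,1)`, with `h(0) = 0` and `h(1) = 1`. -/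
def IsODESol (n : ℕ) (γ ε : ℝ) (h : ℝ → ℝ) : Prop :=
  ContinuousOn h (Icc (0:ℝ) 1) ∧ (∀ r ∈ Ioo (0:ℝ) 1, ContDiffAt ℝ 2 h r) ∧
    (∀ r ∈ Ioo (0:ℝ) 1, Lop n γ ε h r = 0) ∧ h 0 = 0 ∧ h 1 = 1

/-! Let `α` be the positive root of `α² + (n - 1)α = n - 2 + 2/γ`. For `0 < a < r` the barrier
`w(r) = r^α - a^α` satisfies
`r² L w = (n - 2) a^α + 2r² (a^α - (γα - 1) ε r^(α-2)) / (γ (ε + r²))`,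
which is positive once `γε ≤ a²`, because `α < 1` and `r^(α-2) < a^(α-2)`.
Since the zeroth-order coefficient of `L` is nonpositive, `u = h - w` cannot attain a nonpositive
minimum inside `(a, 1)` where `L u = -L w < 0`; as `u(a) = h(a) > 0` and `u(1) = a^α > 0`,
we get `h > w` on `[a, 1]`. With `a = γ√ε` this is the bound for `r > a`, while for `r ≤ a`
the maximum is `0 < r < h(r)`. -/

theorem IsLocalMin.deriv_deriv_nonneg {f : ℝ → ℝ} {x : ℝ} (hmin : IsLocalMin f x)
    (hc : ContinuousAt f x) : 0 ≤ deriv (deriv f) x := by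
  by_contra! hneg
  have hmax : IsLocalMax f x := isLocalMax_of_deriv_deriv_neg hneg hmin.deriv_eq_zero hc
  have hconst : f =ᶠ[nhds x] fun _ ↦ f x := by
    filter_upwards [hmin, hmax] with y hy₁ hy₂ using le_antisymm hy₂ hy₁
  have hzero : deriv (deriv f) x = 0 := by
    rw [hconst.deriv.deriv_eq]
    simp
  linarith

theorem alphaN_sq_add (n : ℕ) (hn : 2 ≤ n) {γ : ℝ} (hγ : 0 < γ) :
    alphaN n γ ^ 2 + ((n : ℝ) - 1) * alphaN n γ = (n : ℝ) - 2 + 2 / γ := by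
  have hn' : (2 : ℝ) ≤ n := by exact_mod_cast hn
  have hD : 0 ≤ ((n : ℝ) - 1) ^ 2 + 4 * ((n : ℝ) - 2 + 2 / γ) := by positivity
  have hsq := Real.sq_sqrt hD
  unfold alphaN
  linear_combination hsq / 4

theorem alphaN_pos (n : ℕ) (hn : 2 ≤ n) {γ : ℝ} (hγ : 0 < γ) : 0 < alphaN n γ := by
  have hn' : (2 : ℝ) ≤ n := by exact_mod_cast hn
  have hlt : (n : ℝ) - 1 < Real.sqrt (((n : ℝ) - 1) ^ 2 + 4 * ((n : ℝ) - 2 + 2 / γ)) := by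
    rw [Real.lt_sqrt (by linarith)]
    have : 0 < 2 / γ := by positivity
    linarith
  unfold alphaN
  linarith

theorem alphaN_lt_one (n : ℕ) {γ : ℝ} (hγ : 1 < γ) : alphaN n γ < 1 := by
  have hlt : Real.sqrt (((n : ℝ) - 1) ^ 2 + 4 * ((n : ℝ) - 2 + 2 / γ)) < n + 1 := by
    rw [Real.sqrt_lt' (by positivity)]
    have : 2 / γ < 2 := by rw [div_lt_iff₀ (by linarith)]; linarith
    linarith
  unfold alphaN
  linarith

theorem Lop_sub {n : ℕ} {γ ε r : ℝ} {h w : ℝ → ℝ} (hh : ContDiffAt ℝ 2 h r)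
    (hw : ContDiffAt ℝ 2 w r) : Lop n γ ε (h - w) r = Lop n γ ε h r - Lop n γ ε w r := by
  have hderiv : deriv (h - w) =ᶠ[nhds r] deriv h - deriv w := by
    filter_upwards [hh.eventually (by simp), hw.eventually (by simp)] with x hhx hwx
    exact deriv_sub (hhx.differentiableAt two_ne_zero) (hwx.differentiableAt two_ne_zero)
  have hdd : ∀ {f : ℝ → ℝ}, ContDiffAt ℝ 2 f r → DifferentiableAt ℝ (deriv f) r :=
    fun hf ↦ (hf.derivWithin (m := 1) (by norm_num)).differentiableAt one_ne_zero
  simp only [Lop, hderiv.deriv_eq, hderiv.self_of_nhds, deriv_sub (hdd hh) (hdd hw), Pi.sub_apply]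
  ring

theorem Lop_nonneg_of_isLocalMin {n : ℕ} (hn : 2 ≤ n) {γ ε r : ℝ} (hγ : 0 < γ) (hε : 0 ≤ ε)
    {u : ℝ → ℝ} (hmin : IsLocalMin u r) (hc : ContinuousAt u r) (hur : u r ≤ 0) :
    0 ≤ Lop n γ ε u r := by
  have hn' : (0 : ℝ) ≤ (n : ℝ) - 2 := by rw [sub_nonneg]; exact_mod_cast hn
  have hq : 0 ≤ ((n : ℝ) - 2) / r ^ 2 + 2 / (γ * (ε + r ^ 2)) := by positivity
  rw [Lop, hmin.deriv_eq_zero, mul_zero, add_zero]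
  nlinarith [hmin.deriv_deriv_nonneg hc]

theorem pos_of_Lop_neg {n : ℕ} (hn : 2 ≤ n) {γ ε a b : ℝ} (hγ : 0 < γ) (hε : 0 ≤ ε)
    {u : ℝ → ℝ} (hu : ContinuousOn u (Icc a b)) (hL : ∀ r ∈ Ioo a b, Lop n γ ε u r < 0)
    (ha : 0 < u a) (hb : 0 < u b) : ∀ r ∈ Icc a b, 0 < u r := by
  intro r hr
  obtain ⟨r₀, hr₀, hmin⟩ := isCompact_Icc.exists_isMinOn ⟨r, hr⟩ hu
  refine lt_of_lt_of_le ?_ (hmin hr)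
  by_contra! hr₀_nonpos
  have hr₀_mem : r₀ ∈ Ioo a b :=
    ⟨hr₀.1.lt_of_ne (by rintro rfl; linarith), hr₀.2.lt_of_ne (by rintro rfl; linarith)⟩
  have hnhds : Icc a b ∈ nhds r₀ := Icc_mem_nhds hr₀_mem.1 hr₀_mem.2
  have hL_nonneg := Lop_nonneg_of_isLocalMin hn hγ hε (hmin.isLocalMin hnhds)
    (hu.continuousAt hnhds) hr₀_nonpos
  linarith [hL r₀ hr₀_mem]

theorem Lop_rpow_sub_const {n : ℕ} {γ ε α m r : ℝ} (hγ : γ ≠ 0) (hε : 0 ≤ ε) (hr : 0 < r)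
    (hα : α ^ 2 + ((n : ℝ) - 1) * α = (n : ℝ) - 2 + 2 / γ) :
    Lop n γ ε (fun x ↦ x ^ α - m) r =
      ((n : ℝ) - 2) * m / r ^ 2 + 2 * (m - (γ * α - 1) * ε * r ^ (α - 2)) / (γ * (ε + r ^ 2)) := by
  have hderiv : deriv (fun x ↦ x ^ α - m) = fun x ↦ α * x ^ (α - 1) := by
    ext x; rw [deriv_sub_const, Real.deriv_rpow_const]
  have hpow₁ : r ^ (α - 1) = r ^ (α - 2) * r := by
    rw [← Real.rpow_add_one hr.ne']; ring_nf
  have hpow₀ : r ^ α = r ^ (α - 2) * r ^ 2 := by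
    rw [← Real.rpow_natCast, ← Real.rpow_add hr]; norm_num
  have hεr : ε + r ^ 2 ≠ 0 := by positivity
  have hα' : γ * (α ^ 2 + ((n : ℝ) - 1) * α) = γ * ((n : ℝ) - 2) + 2 := by
    rw [hα]; field_simp
  rw [Lop, hderiv, deriv_const_mul_field, Real.deriv_rpow_const, show α - 1 - 1 = α - 2 by ring]
  simp only [hpow₁, hpow₀]
  field_simp
  linear_combination (r ^ 2 * r ^ (α - 2) * (ε + r ^ 2)) * hα'

theorem Lop_barrier_pos {n : ℕ} (hn : 2 ≤ n) {γ ε a r : ℝ} (hγ : 1 < γ) (hε : 0 ≤ ε)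
    (ha : 0 < a) (hεa : γ * ε ≤ a ^ 2) (har : a < r) :
    0 < Lop n γ ε (fun x ↦ x ^ alphaN n γ - a ^ alphaN n γ) r := by
  set α := alphaN n γ
  have hγ₀ : 0 < γ := by linarith
  have hr : 0 < r := ha.trans har
  have hα₁ : α < 1 := alphaN_lt_one n hγ
  have hn' : (0 : ℝ) ≤ (n : ℝ) - 2 := by rw [sub_nonneg]; exact_mod_cast hn
  have hdecay : r ^ (α - 2) < a ^ (α - 2) := Real.rpow_lt_rpow_of_neg ha har (by linarith)
  have ha_pow : a ^ α = a ^ 2 * a ^ (α - 2) := by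
    rw [← Real.rpow_natCast, ← Real.rpow_add ha]; norm_num
  have hdefect : (γ * α - 1) * ε * r ^ (α - 2) < a ^ α := by
    have hX : 0 < r ^ (α - 2) := by positivity
    calc (γ * α - 1) * ε * r ^ (α - 2) ≤ γ * ε * r ^ (α - 2) := by gcongr; nlinarith
      _ ≤ a ^ 2 * r ^ (α - 2) := by gcongr
      _ < a ^ 2 * a ^ (α - 2) := by gcongr
      _ = a ^ α := ha_pow.symm
  rw [Lop_rpow_sub_const hγ₀.ne' hε hr (alphaN_sq_add n hn hγ₀)]
  have hfirst : 0 ≤ ((n : ℝ) - 2) * a ^ α / r ^ 2 := by positivity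
  have hsecond : 0 < 2 * (a ^ α - (γ * α - 1) * ε * r ^ (α - 2)) / (γ * (ε + r ^ 2)) := by
    apply div_pos <;> nlinarith [sq_nonneg r]
  linarith

theorem rpow_sub_rpow_lt_of_isODESol {n : ℕ} (hn : 2 ≤ n) {γ ε a : ℝ} (hγ : 1 < γ) (hε : 0 ≤ ε)
    {h : ℝ → ℝ} (hsol : IsODESol n γ ε h) (ha : 0 < a) (hεa : γ * ε ≤ a ^ 2) (hha : 0 < h a) :
    ∀ r ∈ Ioo a 1, r ^ alphaN n γ - a ^ alphaN n γ < h r := by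
  obtain ⟨hcont, hC2, hL, -, h1⟩ := hsol
  set w : ℝ → ℝ := fun x ↦ x ^ alphaN n γ - a ^ alphaN n γ
  have hw : ∀ x, 0 < x → ContDiffAt ℝ 2 w x := fun x hx ↦
    (Real.contDiffAt_rpow_const_of_ne hx.ne').sub contDiffAt_const
  have hpos : ∀ r ∈ Icc a 1, 0 < (h - w) r := by
    refine pos_of_Lop_neg hn (zero_lt_one.trans hγ) hε ?_ ?_ ?_ ?_
    · exact (hcont.mono (Icc_subset_Icc_left ha.le)).sub
        fun x hx ↦ (hw x (ha.trans_le hx.1)).continuousAt.continuousWithinAt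
    · intro r hr
      have hr₀ : r ∈ Ioo (0 : ℝ) 1 := ⟨ha.trans hr.1, hr.2⟩
      rw [Lop_sub (hC2 r hr₀) (hw r hr₀.1), hL r hr₀]
      linarith [Lop_barrier_pos hn hγ hε ha hεa hr.1]
    · simpa [w] using hha
    · simpa [w, h1] using Real.rpow_pos_of_pos ha (alphaN n γ)
  intro r hr
  simpa [w] using hpos r (Ioo_subset_Icc_self hr)

/-- Lemma 7.2: `ε`-independent lower bound `h(r) > max(r^α - (c√ε)^α, 0)`. -/
theorem ode_lower_bound (n : ℕ) (hn : 2 ≤ n) (γ : ℝ) (hγ : 1 < γ) :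
    ∃ c : ℝ, 0 < c ∧
      ∀ ε : ℝ, 0 < ε →
      ∀ h : ℝ → ℝ, IsODESol n γ ε h →
      (∀ r ∈ Ioo (0:ℝ) 1, r < h r) →
      ∀ r ∈ Ioo (0:ℝ) 1,
        max (r ^ alphaN n γ - (c * Real.sqrt ε) ^ alphaN n γ) 0 < h r := by
  refine ⟨γ, by linarith, fun ε hε h hsol hlow r hr ↦ max_lt ?_ (hr.1.trans (hlow r hr))⟩
  set a := γ * Real.sqrt ε
  have ha : 0 < a := by positivity
  rcases le_or_gt r a with hra | har
  · have hpow : r ^ alphaN n γ ≤ a ^ alphaN n γ :=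
      Real.rpow_le_rpow hr.1.le hra (alphaN_pos n hn (by linarith)).le
    linarith [hr.1.trans (hlow r hr)]
  · have hεa : γ * ε ≤ a ^ 2 := by
      rw [mul_pow, Real.sq_sqrt hε.le]
      nlinarith [mul_pos (zero_lt_one.trans hγ) hε]
    exact rpow_sub_rpow_lt_of_isODESol hn hγ hε.le hsol ha hεa
      (ha.trans (hlow a ⟨ha, har.trans hr.2⟩)) r ⟨har, hr.2⟩
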